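/- arXiv:1504.06902 — 2 statements merged into one kernel-verified Lean document; each statement's English description precedes it below -/
import Mathlib

section
/- Let τ > 0 and χ₁(z) = z − exp(−zτ) for z ∈ ℂ. Then χ₁ has exactly three zeros in the closed half-plane {Re z ≥ 0}, all simple (χ₁'(z) ≠ 0 at each zero), and no zero on the imaginary axis {Re z = 0}, if and only if τ ∈ (3π/2, 7π/2). Moreover, for τ ∈ (3π/2, 7π/2) these three zeros are a real zero z₁(τ) ∈ (0, 1) and a complex-conjugate pair z₂(τ), conj(z₂(τ)) with Im z₂(τ) ≠ 0 and Re z₂(τ) < z₁(τ). -/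
/-!
A zero `z = x + iy` of `χ₁` satisfies `z e^{τz} = 1`, i.e. `|z| = e^{-τx}` and
`arg z + τy ∈ 2πℤ`. In `Re z ≥ 0` the only real zero is the root `a ∈ (0, 1)` of `x e^{τx} = 1`,
and a zero with `y > 0` has `x ∈ [0, a)`, `y = √(e^{-2τx} - x²)` and
`τy + arccos (x e^{τx}) ∈ 2πℤ`. This phase decreases strictly from `τ + π/2` at `x = 0` to `0`
at `x = a`, so the zeros with `y > 0` correspond to the multiples `2πk ∈ (0, τ + π/2]`: there is
exactly one iff `2π ≤ τ + π/2 < 4π`, and a zero lies on the imaginary axis iff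
`τ + π/2 ∈ 2πℤ`. Simplicity holds because `χ₁'(z) = 1 + τz` at a zero.
-/

open Filter Real Set Complex

/-- The entire function `χ₁(z) = z - exp(-τ z)`. -/
noncomputable def chi1 (τ : ℝ) (z : ℂ) : ℂ := z - Complex.exp (-(τ * z))

/-- The set of zeros of `χ₁` in the closed right half-plane. -/
def rightZeros (τ : ℝ) : Set ℂ := {z : ℂ | 0 ≤ z.re ∧ chi1 τ z = 0}

open ComplexConjugate

theorem chi1_conj (τ : ℝ) (z : ℂ) : chi1 τ (conj z) = conj (chi1 τ z) := by
  simp [chi1, ← Complex.exp_conj]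

theorem conj_mem_rightZeros {τ : ℝ} {z : ℂ} (hz : z ∈ rightZeros τ) : conj z ∈ rightZeros τ :=
  ⟨by simpa using hz.1, by rw [chi1_conj, hz.2, map_zero]⟩

theorem hasDerivAt_chi1 (τ : ℝ) (z : ℂ) :
    HasDerivAt (chi1 τ) (1 + τ * Complex.exp (-(τ * z))) z := by
  refine ((hasDerivAt_id' z).sub ((hasDerivAt_id' z).const_mul (τ : ℂ)).neg.cexp).congr_deriv ?_
  simp only [Pi.neg_apply]
  ring

theorem deriv_chi1_ne_zero {τ : ℝ} (hτ : 0 ≤ τ) {z : ℂ} (hz : z ∈ rightZeros τ) :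
    deriv (chi1 τ) z ≠ 0 := by
  have hexp : Complex.exp (-(τ * z)) = z := (sub_eq_zero.1 hz.2).symm
  -- so `χ₁'(z) = 1 + τz`, whose real part is at least `1`
  rw [(hasDerivAt_chi1 τ z).deriv, hexp]
  intro h
  have hre := congrArg Complex.re h
  simp only [add_re, one_re, re_ofReal_mul, zero_re] at hre
  nlinarith [hz.1]

theorem chi1_eq_zero_iff (τ : ℝ) (z : ℂ) :
    chi1 τ z = 0 ↔ z.re * Real.exp (τ * z.re) = Real.cos (τ * z.im) ∧
      z.im * Real.exp (τ * z.re) = -Real.sin (τ * z.im) := by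
  rw [chi1, sub_eq_zero, Complex.ext_iff, Complex.exp_re, Complex.exp_im]
  simp only [neg_re, neg_im, re_ofReal_mul, im_ofReal_mul, Real.exp_neg, Real.cos_neg,
    Real.sin_neg, eq_inv_mul_iff_mul_eq₀ (Real.exp_pos _).ne', mul_comm (Real.exp _)]

theorem Real.cos_sin_eq_iff_of_nonneg {t u v : ℝ} (hv : 0 ≤ v) :
    Real.cos t = u ∧ Real.sin t = v ↔ u ^ 2 + v ^ 2 = 1 ∧ ∃ k : ℤ, t = arccos u + k * (2 * π) := by
  constructor
  · rintro ⟨rfl, rfl⟩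
    refine ⟨Real.cos_sq_add_sin_sq t, ?_⟩
    have hsin : Real.sin (arccos (Real.cos t)) = Real.sin t := by
      rw [sin_arccos, ← Real.sin_sq, Real.sqrt_sq hv]
    obtain ⟨k, hk⟩ := (Real.cos_eq_one_iff (t - arccos (Real.cos t))).1 (by
      rw [Real.cos_sub, cos_arccos (neg_one_le_cos t) (cos_le_one t), hsin]
      linear_combination Real.cos_sq_add_sin_sq t)
    exact ⟨k, by linarith⟩
  · rintro ⟨huv, k, rfl⟩
    obtain ⟨hu₁, hu₂⟩ := abs_le_of_sq_le_sq' (by nlinarith : u ^ 2 ≤ 1 ^ 2) zero_le_one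
    rw [Real.cos_add_int_mul_two_pi, Real.sin_add_int_mul_two_pi, cos_arccos hu₁ hu₂, sin_arccos,
      show 1 - u ^ 2 = v ^ 2 by linarith, Real.sqrt_sq hv]
    exact ⟨rfl, rfl⟩

theorem strictMonoOn_mul_exp {τ : ℝ} (hτ : 0 ≤ τ) :
    StrictMonoOn (fun x => x * Real.exp (τ * x)) (Ici 0) := by
  intro x hx y _ hxy
  have hexp : Real.exp (τ * x) ≤ Real.exp (τ * y) := Real.exp_le_exp.2 (by nlinarith)
  dsimp only
  nlinarith [mem_Ici.1 hx, Real.exp_pos (τ * x)]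

theorem exists_mul_exp_eq_one {τ : ℝ} (hτ : 0 < τ) :
    ∃ a ∈ Ioo (0 : ℝ) 1, a * Real.exp (τ * a) = 1 := by
  have hcont : ContinuousOn (fun x => x * Real.exp (τ * x)) (Icc 0 1) := by fun_prop
  have hone : (1 : ℝ) ∈ Ioo (0 * Real.exp (τ * 0)) (1 * Real.exp (τ * 1)) := by
    simpa using Real.one_lt_exp_iff.2 hτ
  exact intermediate_value_Ioo zero_le_one hcont hone

section Root

variable {τ a : ℝ}

theorem pos_of_mul_exp_eq_one (ha : a * Real.exp (τ * a) = 1) : 0 < a :=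
  pos_of_mul_pos_left (ha ▸ one_pos) (Real.exp_pos _).le

theorem eq_of_mul_exp_eq_one (hτ : 0 ≤ τ) (ha : a * Real.exp (τ * a) = 1) {x : ℝ} (hx : 0 ≤ x)
    (h : x * Real.exp (τ * x) = 1) : x = a :=
  (strictMonoOn_mul_exp hτ).injOn hx (pos_of_mul_exp_eq_one ha).le (h.trans ha.symm)

theorem ofReal_mem_rightZeros (ha : a * Real.exp (τ * a) = 1) : (a : ℂ) ∈ rightZeros τ :=
  ⟨by simpa using (pos_of_mul_exp_eq_one ha).le, (chi1_eq_zero_iff τ a).2 (by simpa using ha)⟩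

theorem eq_ofReal_of_mem_rightZeros (hτ : 0 ≤ τ) (ha : a * Real.exp (τ * a) = 1) {z : ℂ}
    (hz : z ∈ rightZeros τ) (him : z.im = 0) : z = a := by
  have hre : z.re * Real.exp (τ * z.re) = 1 := by
    simpa [him] using ((chi1_eq_zero_iff τ z).1 hz.2).1
  exact Complex.ext (by simpa using eq_of_mul_exp_eq_one hτ ha hz.1 hre) (by simpa using him)

theorem re_le_of_mem_rightZeros (hτ : 0 ≤ τ) (ha : a * Real.exp (τ * a) = 1) {z : ℂ}
    (hz : z ∈ rightZeros τ) : z.re ≤ a := by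
  have hle : z.re * Real.exp (τ * z.re) ≤ a * Real.exp (τ * a) :=
    ha ▸ ((chi1_eq_zero_iff τ z).1 hz.2).1 ▸ Real.cos_le_one _
  exact (strictMonoOn_mul_exp hτ).le_iff_le hz.1 (pos_of_mul_exp_eq_one ha).le |>.1 hle

theorem mul_exp_le_one (hτ : 0 ≤ τ) (ha : a * Real.exp (τ * a) = 1) {x : ℝ}
    (hx : x ∈ Icc 0 a) : x * Real.exp (τ * x) ≤ 1 :=
  ha ▸ (strictMonoOn_mul_exp hτ).monotoneOn hx.1 (pos_of_mul_exp_eq_one ha).le hx.2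

theorem sq_le_exp_neg_sq (hτ : 0 ≤ τ) (ha : a * Real.exp (τ * a) = 1) {x : ℝ}
    (hx : x ∈ Icc 0 a) : x ^ 2 ≤ Real.exp (-(τ * x)) ^ 2 := by
  rw [Real.exp_neg, ← one_div]
  exact pow_le_pow_left₀ hx.1 ((le_div_iff₀ (Real.exp_pos _)).2 (mul_exp_le_one hτ ha hx)) 2

end Root

theorem lt_of_mul_two_pi_lt {k m : ℤ} (h : (k : ℝ) * (2 * π) < m * (2 * π)) : k < m := by
  exact_mod_cast lt_of_mul_lt_mul_right h Real.two_pi_pos.le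

namespace Chi1

/-- The `y ≥ 0` with `|x + iy| = exp (-τx)`; every zero `z` of `χ₁` has `|z| = exp (-τ Re z)`. -/
noncomputable def height (τ x : ℝ) : ℝ := √(Real.exp (-(τ * x)) ^ 2 - x ^ 2)

/-- `τ y + arg (x + iy)` for `y = height τ x`: that point is a zero of `χ₁` iff this lies in
`2πℤ`. -/
noncomputable def phase (τ x : ℝ) : ℝ := τ * height τ x + arccos (x * Real.exp (τ * x))

def upperZeros (τ : ℝ) : Set ℂ := {z ∈ rightZeros τ | 0 < z.im}

theorem eq_height_iff {τ x y : ℝ} (hy : 0 ≤ y) (hx : x ^ 2 ≤ Real.exp (-(τ * x)) ^ 2) :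
    y = height τ x ↔ x ^ 2 + y ^ 2 = Real.exp (-(τ * x)) ^ 2 := by
  rw [eq_comm, height, Real.sqrt_eq_iff_eq_sq (sub_nonneg.2 hx) hy]
  constructor <;> intro h <;> linarith

theorem height_zero (τ : ℝ) : height τ 0 = 1 := by simp [height]

theorem phase_zero (τ : ℝ) : phase τ 0 = τ + π / 2 := by simp [phase, height_zero]

theorem continuous_phase (τ : ℝ) : Continuous (phase τ) := by
  unfold phase height
  fun_prop

section Root

variable {τ a : ℝ}

theorem height_eq_zero (ha : a * Real.exp (τ * a) = 1) : height τ a = 0 := by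
  have : Real.exp (-(τ * a)) = a := by rw [Real.exp_neg, inv_eq_of_mul_eq_one_left ha]
  simp [height, this]

theorem phase_eq_zero (ha : a * Real.exp (τ * a) = 1) : phase τ a = 0 := by
  simp [phase, height_eq_zero ha, ha]

theorem height_strictAntiOn (hτ : 0 ≤ τ) (ha : a * Real.exp (τ * a) = 1) :
    StrictAntiOn (height τ) (Icc 0 a) := by
  intro x hx y hy hxy
  have hexp : Real.exp (-(τ * y)) ^ 2 ≤ Real.exp (-(τ * x)) ^ 2 :=
    pow_le_pow_left₀ (Real.exp_pos _).le (Real.exp_le_exp.2 (by nlinarith)) 2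
  exact Real.sqrt_lt_sqrt (sub_nonneg.2 (sq_le_exp_neg_sq hτ ha hy)) (by nlinarith [hx.1])

theorem phase_strictAntiOn (hτ : 0 ≤ τ) (ha : a * Real.exp (τ * a) = 1) :
    StrictAntiOn (phase τ) (Icc 0 a) := by
  have hmem {x : ℝ} (hx : x ∈ Icc 0 a) : x * Real.exp (τ * x) ∈ Icc (-1) 1 :=
    ⟨by nlinarith [hx.1, Real.exp_pos (τ * x)], mul_exp_le_one hτ ha hx⟩
  intro x hx y hy hxy
  have hheight := mul_le_mul_of_nonneg_left (height_strictAntiOn hτ ha hx hy hxy).le hτ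
  have harccos := strictAntiOn_arccos (hmem hx) (hmem hy) (strictMonoOn_mul_exp hτ hx.1 hy.1 hxy)
  simp only [phase]
  linarith

theorem exists_phase_eq (ha : a * Real.exp (τ * a) = 1) {c : ℝ}
    (hc : c ∈ Icc 0 (τ + π / 2)) : ∃ x ∈ Icc 0 a, phase τ x = c :=
  intermediate_value_Icc' (pos_of_mul_exp_eq_one ha).le (continuous_phase τ).continuousOn
    (by rwa [phase_eq_zero ha, phase_zero])

theorem chi1_eq_zero_iff_phase (hτ : 0 ≤ τ) (ha : a * Real.exp (τ * a) = 1) {z : ℂ}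
    (hre : z.re ∈ Icc 0 a) (him : 0 ≤ z.im) :
    chi1 τ z = 0 ↔ z.im = height τ z.re ∧ ∃ k : ℤ, phase τ z.re = k * (2 * π) := by
  set x := z.re
  set y := z.im
  set e := Real.exp (τ * x)
  have hmod : (x * e) ^ 2 + (y * e) ^ 2 = 1 ↔ y = height τ x := by
    rw [eq_height_iff him (sq_le_exp_neg_sq hτ ha hre)]
    set E := Real.exp (-(τ * x))
    have he : E * e = 1 := by rw [← Real.exp_add, neg_add_cancel, Real.exp_zero]
    constructor <;> intro h
    · linear_combination E ^ 2 * h - (x ^ 2 + y ^ 2) * (E * e + 1) * he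
    · linear_combination e ^ 2 * h + (E * e + 1) * he
  have hcossin : (x * e = Real.cos (τ * y) ∧ y * e = -Real.sin (τ * y)) ↔
      Real.cos (-(τ * y)) = x * e ∧ Real.sin (-(τ * y)) = y * e := by
    rw [Real.cos_neg, Real.sin_neg]
    constructor <;> rintro ⟨h₁, h₂⟩ <;> exact ⟨h₁.symm, by linarith⟩
  rw [chi1_eq_zero_iff, hcossin, Real.cos_sin_eq_iff_of_nonneg (mul_nonneg him (Real.exp_pos _).le),
    hmod]
  refine and_congr_right fun hy => ?_
  rw [phase, ← hy]
  constructor <;> rintro ⟨k, hk⟩ <;> exact ⟨-k, by push_cast; linarith⟩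

theorem mem_upperZeros_iff (hτ : 0 ≤ τ) (ha : a * Real.exp (τ * a) = 1) {z : ℂ} :
    z ∈ upperZeros τ ↔
      z.re ∈ Ico 0 a ∧ z.im = height τ z.re ∧ ∃ k : ℤ, phase τ z.re = k * (2 * π) := by
  constructor
  · rintro ⟨hz, him⟩
    have hre : z.re ∈ Icc 0 a := ⟨hz.1, re_le_of_mem_rightZeros hτ ha hz⟩
    obtain ⟨hy, hk⟩ := (chi1_eq_zero_iff_phase hτ ha hre him.le).1 hz.2
    refine ⟨⟨hre.1, hre.2.lt_of_ne fun hra => ?_⟩, hy, hk⟩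
    rw [hra, height_eq_zero ha] at hy
    exact him.ne' hy
  · rintro ⟨hre, hy, hk⟩
    have ha₀ : a ∈ Icc 0 a := right_mem_Icc.2 (pos_of_mul_exp_eq_one ha).le
    have him : 0 < z.im :=
      hy ▸ height_eq_zero ha ▸ height_strictAntiOn hτ ha (Ico_subset_Icc_self hre) ha₀ hre.2
    exact ⟨⟨hre.1, (chi1_eq_zero_iff_phase hτ ha (Ico_subset_Icc_self hre) him.le).2 ⟨hy, hk⟩⟩,
      him⟩

theorem exists_int_of_mem_upperZeros (hτ : 0 ≤ τ) (ha : a * Real.exp (τ * a) = 1) {z : ℂ}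
    (hz : z ∈ upperZeros τ) :
    ∃ k : ℤ, 0 < k ∧ phase τ z.re = k * (2 * π) ∧ k * (2 * π) ≤ τ + π / 2 := by
  obtain ⟨hre, -, k, hk⟩ := (mem_upperZeros_iff hτ ha).1 hz
  have ha₀ : 0 ≤ a := (pos_of_mul_exp_eq_one ha).le
  have hpos : 0 < phase τ z.re := phase_eq_zero ha ▸
    phase_strictAntiOn hτ ha (Ico_subset_Icc_self hre) (right_mem_Icc.2 ha₀) hre.2
  have hle : phase τ z.re ≤ τ + π / 2 := phase_zero τ ▸
    (phase_strictAntiOn hτ ha).antitoneOn (left_mem_Icc.2 ha₀) (Ico_subset_Icc_self hre) hre.1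
  refine ⟨k, lt_of_mul_two_pi_lt ?_, hk, hk ▸ hle⟩
  simpa [← hk] using hpos

theorem exists_mem_upperZeros_phase_eq (hτ : 0 ≤ τ) (ha : a * Real.exp (τ * a) = 1) (k : ℤ)
    (hk : (k : ℝ) * (2 * π) ∈ Ioc 0 (τ + π / 2)) :
    ∃ z ∈ upperZeros τ, phase τ z.re = k * (2 * π) := by
  obtain ⟨x, hx, hxk⟩ := exists_phase_eq ha (Ioc_subset_Icc_self hk)
  have hxa : x < a := hx.2.lt_of_ne <| by
    rintro rfl
    rw [phase_eq_zero ha] at hxk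
    exact hk.1.ne hxk
  exact ⟨⟨x, height τ x⟩, (mem_upperZeros_iff hτ ha).2 ⟨⟨hx.1, hxa⟩, rfl, k, hxk⟩, hxk⟩

theorem injOn_phase_re_upperZeros (hτ : 0 ≤ τ) (ha : a * Real.exp (τ * a) = 1) :
    InjOn (fun z => phase τ z.re) (upperZeros τ) := by
  intro z hz w hw h
  obtain ⟨hzre, hzim, -⟩ := (mem_upperZeros_iff hτ ha).1 hz
  obtain ⟨hwre, hwim, -⟩ := (mem_upperZeros_iff hτ ha).1 hw
  have hre : z.re = w.re :=
    (phase_strictAntiOn hτ ha).injOn (Ico_subset_Icc_self hzre) (Ico_subset_Icc_self hwre) h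
  exact Complex.ext hre (by rw [hzim, hwim, hre])

theorem upperZeros_eq_empty (hτ : 0 ≤ τ) (ha : a * Real.exp (τ * a) = 1) (h : τ < 3 * π / 2) :
    upperZeros τ = ∅ := by
  refine eq_empty_of_forall_notMem fun z hz => ?_
  obtain ⟨k, hk₀, -, hk⟩ := exists_int_of_mem_upperZeros hτ ha hz
  have : (1 : ℝ) ≤ k := by exact_mod_cast hk₀
  nlinarith [Real.pi_pos]

theorem upperZeros_eq_singleton (hτ : 0 ≤ τ) (ha : a * Real.exp (τ * a) = 1)
    (h : τ ∈ Ico (3 * π / 2) (7 * π / 2)) : ∃ w, upperZeros τ = {w} := by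
  obtain ⟨w, hw, hw₁⟩ :=
    exists_mem_upperZeros_phase_eq hτ ha 1 ⟨by positivity, by push_cast; linarith [h.1]⟩
  refine ⟨w, eq_singleton_iff_unique_mem.2 ⟨hw, fun z hz => ?_⟩⟩
  obtain ⟨k, hk₀, hk, hkτ⟩ := exists_int_of_mem_upperZeros hτ ha hz
  obtain rfl : k = 1 := by
    have := lt_of_mul_two_pi_lt (k := k) (m := 2) (by push_cast; linarith [h.2])
    omega
  exact injOn_phase_re_upperZeros hτ ha hz hw (hk.trans hw₁.symm)

theorem one_lt_encard_upperZeros (hτ : 0 ≤ τ) (ha : a * Real.exp (τ * a) = 1)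
    (h : 7 * π / 2 ≤ τ) : 1 < (upperZeros τ).encard := by
  obtain ⟨w₁, hw₁, h₁⟩ :=
    exists_mem_upperZeros_phase_eq hτ ha 1 ⟨by positivity, by push_cast; linarith⟩
  obtain ⟨w₂, hw₂, h₂⟩ :=
    exists_mem_upperZeros_phase_eq hτ ha 2 ⟨by positivity, by push_cast; linarith⟩
  refine one_lt_encard_iff.2 ⟨w₁, w₂, hw₁, hw₂, fun hw => ?_⟩
  rw [hw, h₂] at h₁
  push_cast at h₁
  linarith [Real.pi_pos]

theorem rightZeros_eq_insert (hτ : 0 ≤ τ) (ha : a * Real.exp (τ * a) = 1) :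
    rightZeros τ = insert (a : ℂ) (upperZeros τ ∪ conj '' upperZeros τ) := by
  ext z
  refine ⟨fun hz => ?_, ?_⟩
  · rcases lt_trichotomy z.im 0 with him | him | him
    · exact .inr (.inr ⟨conj z, ⟨conj_mem_rightZeros hz, by simpa using him⟩, conj_conj z⟩)
    · exact .inl (eq_ofReal_of_mem_rightZeros hτ ha hz him)
    · exact .inr (.inl ⟨hz, him⟩)
  · rintro (rfl | hz | ⟨w, hw, rfl⟩)
    · exact ofReal_mem_rightZeros ha
    · exact hz.1
    · exact conj_mem_rightZeros hw.1

theorem encard_rightZeros (hτ : 0 ≤ τ) (ha : a * Real.exp (τ * a) = 1) :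
    (rightZeros τ).encard = 2 * (upperZeros τ).encard + 1 := by
  have hdisj : Disjoint (upperZeros τ) (conj '' upperZeros τ) := by
    refine disjoint_left.2 fun z hz ⟨w, hw, hwz⟩ => ?_
    have := congrArg Complex.im hwz
    simp only [conj_im] at this
    linarith [hz.2, hw.2]
  have hnotMem : (a : ℂ) ∉ upperZeros τ ∪ conj '' upperZeros τ := by
    rintro (hz | ⟨w, hw, hwa⟩)
    · simpa using hz.2
    · have := congrArg Complex.im hwa
      simp only [conj_im, ofReal_im] at this
      linarith [hw.2]
  rw [rightZeros_eq_insert hτ ha, encard_insert_of_notMem hnotMem, encard_union_eq hdisj,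
    (starRingEnd ℂ).injective.encard_image, two_mul]

theorem encard_rightZeros_eq_three_iff (hτ : 0 ≤ τ) (ha : a * Real.exp (τ * a) = 1) :
    (rightZeros τ).encard = 3 ↔ τ ∈ Ico (3 * π / 2) (7 * π / 2) := by
  have hcount : (rightZeros τ).encard = 3 ↔ (upperZeros τ).encard = 1 := by
    rw [encard_rightZeros hτ ha]
    generalize (upperZeros τ).encard = n
    cases n with
    | top => simp
    | coe n => norm_cast; omega
  rw [hcount]
  refine ⟨fun h₁ => ⟨not_lt.1 fun h => ?_, not_le.1 fun h => ?_⟩, fun h => ?_⟩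
  · simp [upperZeros_eq_empty hτ ha h] at h₁
  · exact (one_lt_encard_upperZeros hτ ha h).ne' h₁
  · obtain ⟨w, hw⟩ := upperZeros_eq_singleton hτ ha h
    rw [hw, encard_singleton]

theorem exists_re_eq_zero_iff (hτ : 0 ≤ τ) (ha : a * Real.exp (τ * a) = 1) :
    (∃ z ∈ rightZeros τ, z.re = 0) ↔ ∃ k : ℤ, τ + π / 2 = k * (2 * π) := by
  have h₀ : (0 : ℝ) ∈ Icc 0 a := left_mem_Icc.2 (pos_of_mul_exp_eq_one ha).le
  constructor
  · rintro ⟨z, hz, hre⟩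
    obtain ⟨w, hw, hwre, hwim⟩ : ∃ w ∈ rightZeros τ, w.re = 0 ∧ 0 ≤ w.im := by
      rcases le_total 0 z.im with him | him
      · exact ⟨z, hz, hre, him⟩
      · exact ⟨conj z, conj_mem_rightZeros hz, by simpa using hre, by simpa using him⟩
    obtain ⟨-, k, hk⟩ := (chi1_eq_zero_iff_phase hτ ha (hwre ▸ h₀) hwim).1 hw.2
    exact ⟨k, by rwa [hwre, phase_zero] at hk⟩
  · rintro ⟨k, hk⟩
    have hI : chi1 τ I = 0 := (chi1_eq_zero_iff_phase hτ ha (by simpa using h₀) (by simp)).2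
      ⟨by simp [height_zero], k, by simpa [phase_zero] using hk⟩
    exact ⟨I, ⟨by simp, hI⟩, I_re⟩

end Root

end Chi1

theorem mem_Ioo_iff_mem_Ico_and_forall_ne {τ : ℝ} :
    τ ∈ Ioo (3 * π / 2) (7 * π / 2) ↔
      τ ∈ Ico (3 * π / 2) (7 * π / 2) ∧ ∀ k : ℤ, τ + π / 2 ≠ k * (2 * π) := by
  constructor
  · rintro ⟨h₁, h₂⟩
    refine ⟨⟨h₁.le, h₂⟩, fun k hk => ?_⟩
    have := lt_of_mul_two_pi_lt (k := 1) (m := k) (by push_cast; linarith)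
    have := lt_of_mul_two_pi_lt (k := k) (m := 2) (by push_cast; linarith)
    omega
  · rintro ⟨⟨h₁, h₂⟩, hk⟩
    refine ⟨h₁.lt_of_ne fun h => hk 1 ?_, h₂⟩
    rw [← h]
    push_cast
    ring

open Chi1 in
/-- for `τ > 0`, `χ₁(z) = z - e^{-τz}` has exactly three zeros in
`{Re z ≥ 0}`, all simple, none on the imaginary axis, iff
`τ ∈ (3π/2, 7π/2)`; and in that case the zeros are a real `z₁ ∈ (0,1)` and a
conjugate pair `z₂, conj z₂` with `Im z₂ ≠ 0` and `Re z₂ < z₁`. -/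
theorem chi1_right_halfplane_zeros (τ : ℝ) (hτ : 0 < τ) :
    (((rightZeros τ).encard = 3 ∧
      (∀ z ∈ rightZeros τ, deriv (chi1 τ) z ≠ 0) ∧
      (∀ z ∈ rightZeros τ, z.re ≠ 0)) ↔ τ ∈ Ioo (3 * π / 2) (7 * π / 2)) ∧
    (τ ∈ Ioo (3 * π / 2) (7 * π / 2) →
      ∃ (z₁ : ℝ) (z₂ : ℂ), z₁ ∈ Ioo (0 : ℝ) 1 ∧ z₂.im ≠ 0 ∧ z₂.re < z₁ ∧
        rightZeros τ = {(z₁ : ℂ), z₂, (starRingEnd ℂ) z₂}) := by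
  obtain ⟨a, ha₀₁, ha⟩ := exists_mul_exp_eq_one hτ
  have hderiv : ∀ z ∈ rightZeros τ, deriv (chi1 τ) z ≠ 0 := fun z hz =>
    deriv_chi1_ne_zero hτ.le hz
  have haxis : (∀ z ∈ rightZeros τ, z.re ≠ 0) ↔ ∀ k : ℤ, τ + π / 2 ≠ k * (2 * π) := by
    simpa using (exists_re_eq_zero_iff hτ.le ha).not
  refine ⟨?_, fun h => ?_⟩
  · rw [encard_rightZeros_eq_three_iff hτ.le ha, haxis, mem_Ioo_iff_mem_Ico_and_forall_ne,
      iff_true_intro hderiv, true_and]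
  · obtain ⟨w, hw⟩ := upperZeros_eq_singleton hτ.le ha (Ioo_subset_Ico_self h)
    have hwU : w ∈ upperZeros τ := hw ▸ rfl
    refine ⟨a, w, ha₀₁, hwU.2.ne', ((mem_upperZeros_iff hτ.le ha).1 hwU).1.2, ?_⟩
    rw [rightZeros_eq_insert hτ.le ha, hw, image_singleton, singleton_union]
end

section
/- Let K be a nonnegative integrable kernel with ∫_ℝ K = 1, c > 0, β > 1, and let φ be a nonnegative, bounded, non-constant C² solution of the truncated profile equation φ''(t) − cφ'(t) + g_β(φ(t))(1 − (K*φ)(t)) = 0 with lim_{t→−∞} φ(t) = 0. Then φ(t) ≤ 2β for all t ∈ ℝ. Moreover, if t₀ is a point of local maximum of φ with φ(t₀) < 2β, or if t₀ is the smallest number with φ(t₀) = 2β, then (K*φ)(t₀) ≤ 1. -/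
/-!
Where `φ > 2β` the truncation vanishes, so `φ'' = cφ'` and `e^{-ct}φ'` is constant. If `φ`
ever exceeded `2β`, then, since `φ → 0` at `-∞`, it would do so somewhere with positive slope;
from there on `φ'` can only grow, so `φ` never returns below `2β` and grows at least linearly,
contradicting boundedness.

At a local maximum `φ' = 0` and `φ'' ≤ 0`, so `g_β(φ)(1 - K*φ) ≥ 0`, which gives `K*φ ≤ 1`
when `0 < φ < 2β`; a critical point with `φ = 0` is impossible, since by Grönwall's inequality
for `(φ, φ')` it forces `φ ≡ 0`. At the first point `t₀` with `φ = 2β`, if `K*φ(t₀) > 1`,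
then `e^{-ct}φ'` is nondecreasing just to the left of `t₀`, where it is therefore `≤ 0`; so `φ`
is nonincreasing there and already equals `2β` before `t₀`.
-/

open Filter MeasureTheory Real Set

noncomputable def conv (K φ : ℝ → ℝ) (t : ℝ) : ℝ := ∫ s, K s * φ (t - s)

/-- The truncation `g_β`: `g_β(u) = u` for `u ≤ β`, `g_β(u) = max{0, 2β - u}`
for `u > β`. -/
noncomputable def gbeta (β u : ℝ) : ℝ := if u ≤ β then u else max 0 (2 * β - u)

/-- The truncated profile equation
`φ''(t) - c φ'(t) + g_β(φ(t))(1 - (K*φ)(t)) = 0`. -/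
def TruncProfileEq (K : ℝ → ℝ) (c β : ℝ) (φ : ℝ → ℝ) : Prop :=
  ∀ t, deriv (deriv φ) t - c * deriv φ t + gbeta β (φ t) * (1 - conv K φ t) = 0

section Truncation

variable {β u : ℝ}

lemma gbeta_nonneg (hu : 0 ≤ u) : 0 ≤ gbeta β u := by
  unfold gbeta; split_ifs <;> simp [hu]

lemma gbeta_le_self (hu : 0 ≤ u) : gbeta β u ≤ u := by
  unfold gbeta; split_ifs
  · exact le_rfl
  · exact max_le hu (by linarith)

lemma gbeta_pos (hu : 0 < u) (hu' : u < 2 * β) : 0 < gbeta β u := by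
  unfold gbeta; split_ifs
  · exact hu
  · exact lt_max_of_lt_right (by linarith)

lemma gbeta_eq_zero (hβ : 0 ≤ β) (hu : 2 * β < u) : gbeta β u = 0 := by
  unfold gbeta
  rw [if_neg (by linarith)]
  exact max_eq_left (by linarith)

end Truncation

open Topology

open scoped Convolution in
lemma conv_eq_convolution (K φ : ℝ → ℝ) :
    conv K φ = K ⋆[ContinuousLinearMap.mul ℝ ℝ] φ := by
  ext t; simp [conv, convolution_def]

lemma continuous_conv {K φ : ℝ → ℝ} {M : ℝ} (hK : Integrable K) (hφ : Continuous φ)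
    (hM : ∀ t, |φ t| ≤ M) : Continuous (conv K φ) := by
  rw [conv_eq_convolution]
  exact BddAbove.continuous_convolution_right_of_integrable _
    ⟨M, forall_mem_range.2 hM⟩ hK hφ

lemma abs_conv_le {K φ : ℝ → ℝ} {M : ℝ} (hK : Integrable K) (hM : ∀ t, |φ t| ≤ M)
    (t : ℝ) : |conv K φ t| ≤ (∫ s, |K s|) * M := by
  rw [← integral_mul_const, ← Real.norm_eq_abs, conv]
  refine norm_integral_le_of_norm_le (hK.abs.mul_const M) (ae_of_all _ fun s => ?_)
  rw [norm_mul, Real.norm_eq_abs, Real.norm_eq_abs]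
  exact mul_le_mul_of_nonneg_left (hM _) (abs_nonneg _)

section SecondOrder

variable {φ : ℝ → ℝ} {c a b x : ℝ}

lemma hasDerivAt_exp_mul_deriv (hφ : DifferentiableAt ℝ (deriv φ) x) :
    HasDerivAt (fun y => exp (-(c * y)) * deriv φ y)
      (exp (-(c * x)) * (deriv (deriv φ) x - c * deriv φ x)) x := by
  have hexp : HasDerivAt (fun y => exp (-(c * y))) (exp (-(c * x)) * -c) x := by
    simpa using ((hasDerivAt_id x).const_mul c).neg.exp
  exact (hexp.mul hφ.hasDerivAt).congr_deriv (by ring)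

lemma monotoneOn_exp_mul_deriv (hφ : Differentiable ℝ (deriv φ))
    (h : ∀ x ∈ Ioo a b, c * deriv φ x ≤ deriv (deriv φ) x) :
    MonotoneOn (fun x => exp (-(c * x)) * deriv φ x) (Icc a b) := by
  have hψ := fun x => hasDerivAt_exp_mul_deriv (c := c) (hφ x)
  refine monotoneOn_of_deriv_nonneg (convex_Icc a b)
    (fun x _ => (hψ x).continuousAt.continuousWithinAt)
    (fun x _ => (hψ x).differentiableAt.differentiableWithinAt) fun x hx => ?_
  rw [interior_Icc] at hx
  rw [(hψ x).deriv]
  exact mul_nonneg (exp_pos _).le (sub_nonneg.2 (h x hx))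

lemma deriv_le_deriv_of_mul_deriv_le_deriv_deriv (hφ : Differentiable ℝ (deriv φ)) (hc : 0 ≤ c)
    (h : ∀ x ∈ Ioo a b, c * deriv φ x ≤ deriv (deriv φ) x) (ha : 0 ≤ deriv φ a)
    (hx : x ∈ Icc a b) : deriv φ a ≤ deriv φ x := by
  have hmono := monotoneOn_exp_mul_deriv hφ h (left_mem_Icc.2 (hx.1.trans hx.2)) hx hx.1
  have hexp : exp (-(c * x)) ≤ exp (-(c * a)) := exp_le_exp.2 (by nlinarith [hx.1])
  refine le_of_mul_le_mul_left ?_ (exp_pos (-(c * x)))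
  calc exp (-(c * x)) * deriv φ a ≤ exp (-(c * a)) * deriv φ a :=
        mul_le_mul_of_nonneg_right hexp ha
    _ ≤ exp (-(c * x)) * deriv φ x := hmono

lemma add_deriv_mul_le_of_mul_deriv_le_deriv_deriv (hφ₁ : Differentiable ℝ φ)
    (hφ₂ : Differentiable ℝ (deriv φ)) (hc : 0 ≤ c)
    (h : ∀ x ∈ Ioo a b, c * deriv φ x ≤ deriv (deriv φ) x) (ha : 0 ≤ deriv φ a) (hab : a ≤ b) :
    φ a + deriv φ a * (b - a) ≤ φ b := by
  have := (convex_Icc a b).mul_sub_le_image_sub_of_le_deriv hφ₁.continuous.continuousOn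
    hφ₁.differentiableOn (C := deriv φ a) (fun x hx =>
      deriv_le_deriv_of_mul_deriv_le_deriv_deriv hφ₂ hc h ha (interior_subset hx))
    a (left_mem_Icc.2 hab) b (right_mem_Icc.2 hab) hab
  linarith

lemma le_of_deriv_eq_zero_of_mul_deriv_le_deriv_deriv (hφ₁ : Differentiable ℝ φ)
    (hφ₂ : Differentiable ℝ (deriv φ)) (h : ∀ x ∈ Ioo a b, c * deriv φ x ≤ deriv (deriv φ) x)
    (hb : deriv φ b = 0) (hab : a ≤ b) : φ b ≤ φ a := by
  have hderiv : ∀ x ∈ Icc a b, deriv φ x ≤ 0 := fun x hx => by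
    have : exp (-(c * x)) * deriv φ x ≤ exp (-(c * b)) * deriv φ b :=
      monotoneOn_exp_mul_deriv hφ₂ h hx (right_mem_Icc.2 hab) hx.2
    rw [hb, mul_zero] at this
    exact nonpos_of_mul_nonpos_right this (exp_pos _)
  have := (convex_Icc a b).image_sub_le_mul_sub_of_deriv_le hφ₁.continuous.continuousOn
    hφ₁.differentiableOn (C := 0) (fun x hx => hderiv x (interior_subset hx))
    a (left_mem_Icc.2 hab) b (right_mem_Icc.2 hab) hab
  linarith

end SecondOrder

lemma exists_lt_deriv_pos_of_le_of_lt {f : ℝ → ℝ} {a b L : ℝ} (hf : Differentiable ℝ f)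
    (hab : a ≤ b) (ha : f a ≤ L) (hb : L < f b) : ∃ ξ, L < f ξ ∧ 0 < deriv f ξ := by
  obtain ⟨a₀, ⟨⟨ha₀a, ha₀b⟩, ha₀L : f a₀ ≤ L⟩, ha₀max⟩ :
      ∃ a₀, IsGreatest (Icc a b ∩ {x | f x ≤ L}) a₀ :=
    (isCompact_Icc.inter_right (isClosed_le hf.continuous continuous_const)).exists_isGreatest
      ⟨a, ⟨le_rfl, hab⟩, ha⟩
  have ha₀b' : a₀ < b := ha₀b.lt_of_ne (by rintro rfl; exact hb.not_ge ha₀L)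
  obtain ⟨ξ, ⟨hξa₀, hξb⟩, hslope⟩ := exists_deriv_eq_slope f ha₀b'
    hf.continuous.continuousOn hf.differentiableOn
  refine ⟨ξ, lt_of_not_ge fun hξL => ?_, ?_⟩
  · exact hξa₀.not_ge (ha₀max ⟨⟨ha₀a.trans hξa₀.le, hξb.le⟩, hξL⟩)
  · rw [hslope]
    exact div_pos (by linarith) (by linarith)

section AboveLevel

variable {φ : ℝ → ℝ} {c L ξ : ℝ} (hφ₁ : Differentiable ℝ φ) (hφ₂ : Differentiable ℝ (deriv φ))
  (hc : 0 ≤ c) (habove : ∀ x, L < φ x → c * deriv φ x ≤ deriv (deriv φ) x) (hξ : L < φ ξ)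
include hφ₁ hφ₂ hc habove hξ

lemma lt_of_deriv_nonneg_of_mul_deriv_le_deriv_deriv_above (hξ' : 0 ≤ deriv φ ξ) {t : ℝ}
    (ht : ξ ≤ t) : L < φ t := by
  by_contra! htL
  obtain ⟨b, ⟨⟨hξb, hbt⟩, hbL : φ b ≤ L⟩, hbmin⟩ : ∃ b, IsLeast (Icc ξ t ∩ {x | φ x ≤ L}) b :=
    (isCompact_Icc.inter_right (isClosed_le hφ₁.continuous continuous_const)).exists_isLeast
      ⟨t, ⟨ht, le_rfl⟩, htL⟩
  have hgrowth := add_deriv_mul_le_of_mul_deriv_le_deriv_deriv hφ₁ hφ₂ hc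
    (fun x hx => habove x (lt_of_not_ge fun hxL =>
      hx.2.not_ge (hbmin ⟨⟨hx.1.le, hx.2.le.trans hbt⟩, hxL⟩))) hξ' hξb
  nlinarith [mul_nonneg hξ' (sub_nonneg.2 hξb)]

lemma not_bddAbove_range_of_mul_deriv_le_deriv_deriv_above (hξ' : 0 < deriv φ ξ) :
    ¬BddAbove (range φ) := by
  rintro ⟨M, hM⟩
  set t := ξ + (|M - φ ξ| + 1) / deriv φ ξ
  have hξt : ξ ≤ t := le_add_of_nonneg_right (by positivity)
  have hgrowth := add_deriv_mul_le_of_mul_deriv_le_deriv_deriv hφ₁ hφ₂ hc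
    (fun x hx => habove x (lt_of_deriv_nonneg_of_mul_deriv_le_deriv_deriv_above hφ₁ hφ₂ hc
      habove hξ hξ'.le hx.1.le)) hξ'.le hξt
  have hlin : deriv φ ξ * (t - ξ) = |M - φ ξ| + 1 := by
    simp only [t, add_sub_cancel_left]; field_simp
  have := hM (mem_range_self t)
  linarith [le_abs_self (M - φ ξ)]

end AboveLevel

lemma eq_zero_of_norm_deriv_le_mul_norm {E : Type*} [NormedAddCommGroup E] [NormedSpace ℝ E]
    {f f' : ℝ → E} {K t₀ : ℝ} (hf : ∀ t, HasDerivAt f (f' t) t)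
    (bound : ∀ t, ‖f' t‖ ≤ K * ‖f t‖) (h₀ : f t₀ = 0) (t : ℝ) : f t = 0 := by
  have hcont : Continuous f := continuous_iff_continuousAt.2 fun t => (hf t).continuousAt
  rcases le_total t₀ t with ht | ht
  · exact eq_zero_of_abs_deriv_le_mul_abs_self_of_eq_zero_right hcont.continuousOn
      (fun x _ => (hf x).hasDerivWithinAt) h₀ (fun x _ => bound x) t ⟨ht, le_rfl⟩
  · have hrefl : ∀ s, HasDerivAt (fun s => f (-s)) (-f' (-s)) s := fun s => by
      simpa [Function.comp_def] using (hf (-s)).scomp s (hasDerivAt_neg s)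
    simpa using eq_zero_of_abs_deriv_le_mul_abs_self_of_eq_zero_right (a := -t₀)
      (hcont.comp continuous_neg).continuousOn (fun x _ => (hrefl x).hasDerivWithinAt)
      (by simpa using h₀) (fun x _ => by simpa using bound (-x)) (-t) ⟨neg_le_neg ht, le_rfl⟩

lemma eq_zero_of_abs_deriv_deriv_le {φ : ℝ → ℝ} {K t₀ : ℝ} (hφ₁ : Differentiable ℝ φ)
    (hφ₂ : Differentiable ℝ (deriv φ))
    (bound : ∀ t, |deriv (deriv φ) t| ≤ K * max |φ t| |deriv φ t|)
    (h₀ : φ t₀ = 0) (h₀' : deriv φ t₀ = 0) (t : ℝ) : φ t = 0 := by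
  refine congrArg Prod.fst (eq_zero_of_norm_deriv_le_mul_norm (K := max 1 K) (t₀ := t₀)
    (f' := fun t => (deriv φ t, deriv (deriv φ) t))
    (fun t => (hφ₁ t).hasDerivAt.prodMk (hφ₂ t).hasDerivAt) (fun t => ?_)
    (by simp [h₀, h₀']) t)
  simp only [Prod.norm_mk, Real.norm_eq_abs]
  have hm : 0 ≤ max |φ t| |deriv φ t| := (abs_nonneg _).trans (le_max_left _ _)
  refine max_le ((le_max_right _ _).trans (le_mul_of_one_le_left hm (le_max_left _ _))) ?_
  exact (bound t).trans (mul_le_mul_of_nonneg_right (le_max_right _ _) hm)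

lemma IsLocalMax.deriv_deriv_nonpos {f : ℝ → ℝ} {x : ℝ} (h : IsLocalMax f x)
    (hc : ContinuousAt f x) : deriv (deriv f) x ≤ 0 := by
  by_contra! hpos
  have hmin := isLocalMin_of_deriv_deriv_pos hpos h.deriv_eq_zero hc
  have hconst : f =ᶠ[𝓝 x] fun _ => f x := (hmin.and h).mono fun y hy => le_antisymm hy.2 hy.1
  have := hconst.deriv.deriv_eq
  simp only [deriv_const', deriv_const] at this
  exact hpos.ne' this

namespace TruncProfileEq

variable {K : ℝ → ℝ} {c β : ℝ} {φ : ℝ → ℝ}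

lemma deriv_deriv_eq (heq : TruncProfileEq K c β φ) (t : ℝ) :
    deriv (deriv φ) t = c * deriv φ t + gbeta β (φ t) * (conv K φ t - 1) := by
  linear_combination heq t

lemma le_two_mul (heq : TruncProfileEq K c β φ) (hc : 0 ≤ c) (hβ : 0 < β)
    (hφ : ContDiff ℝ 2 φ) (hbdd : BddAbove (range φ)) (hbot : Tendsto φ atBot (𝓝 0))
    (t : ℝ) : φ t ≤ 2 * β := by
  by_contra! ht
  obtain ⟨a, ha, hat⟩ := ((hbot.eventually (gt_mem_nhds (by linarith : (0 : ℝ) < 2 * β))).and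
    (eventually_le_atBot t)).exists
  obtain ⟨ξ, hξ, hξ'⟩ :=
    exists_lt_deriv_pos_of_le_of_lt (hφ.differentiable two_ne_zero) hat ha.le ht
  refine not_bddAbove_range_of_mul_deriv_le_deriv_deriv_above (hφ.differentiable two_ne_zero)
    hφ.differentiable_deriv_two hc (fun x hx => ?_) hξ hξ' hbdd
  rw [heq.deriv_deriv_eq, gbeta_eq_zero hβ.le hx, zero_mul, add_zero]

lemma eq_zero_of_eq_zero_of_deriv_eq_zero (heq : TruncProfileEq K c β φ) (hK : Integrable K)
    (hφ : ContDiff ℝ 2 φ) (hφ0 : ∀ t, 0 ≤ φ t) {M : ℝ} (hM : ∀ t, |φ t| ≤ M) {t₀ : ℝ}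
    (h₀ : φ t₀ = 0) (h₀' : deriv φ t₀ = 0) (t : ℝ) : φ t = 0 := by
  have hconv : ∀ t, |conv K φ t - 1| ≤ (∫ s, |K s|) * M + 1 := fun t =>
    (abs_sub _ _).trans (by rw [abs_one]; linarith [abs_conv_le hK hM t])
  set B := (∫ s, |K s|) * M + 1
  have hB : 0 ≤ B := by
    have : 0 ≤ ∫ s, |K s| := integral_nonneg fun s => abs_nonneg _
    have := (abs_nonneg _).trans (hM 0)
    positivity
  refine eq_zero_of_abs_deriv_deriv_le (K := |c| + B) (hφ.differentiable two_ne_zero)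
    hφ.differentiable_deriv_two (fun t => ?_) h₀ h₀' t
  have hg0 := gbeta_nonneg (β := β) (hφ0 t)
  have hgφ : gbeta β (φ t) ≤ max |φ t| |deriv φ t| :=
    (gbeta_le_self (hφ0 t)).trans ((le_abs_self _).trans (le_max_left _ _))
  rw [heq.deriv_deriv_eq]
  calc |c * deriv φ t + gbeta β (φ t) * (conv K φ t - 1)|
      ≤ |c * deriv φ t| + |gbeta β (φ t) * (conv K φ t - 1)| := abs_add_le _ _
    _ = |c| * |deriv φ t| + gbeta β (φ t) * |conv K φ t - 1| := by
        rw [abs_mul, abs_mul, abs_of_nonneg hg0]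
    _ ≤ |c| * max |φ t| |deriv φ t| + max |φ t| |deriv φ t| * B := by
        gcongr
        · exact le_max_right _ _
        · exact hconv t
    _ = (|c| + B) * max |φ t| |deriv φ t| := by ring

lemma conv_le_one_of_isLocalMax (heq : TruncProfileEq K c β φ) (hK : Integrable K)
    (hφ : ContDiff ℝ 2 φ) (hφ0 : ∀ t, 0 ≤ φ t) (hle : ∀ t, φ t ≤ 2 * β)
    (hnc : ∃ t₁ t₂, φ t₁ ≠ φ t₂) {t₀ : ℝ} (hmax : IsLocalMax φ t₀) (hlt : φ t₀ < 2 * β) :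
    conv K φ t₀ ≤ 1 := by
  have h₀' := hmax.deriv_eq_zero
  rcases (hφ0 t₀).eq_or_lt with h₀ | hpos
  · obtain ⟨t₁, t₂, hne⟩ := hnc
    have hzero := heq.eq_zero_of_eq_zero_of_deriv_eq_zero hK hφ hφ0
      (fun t => (abs_of_nonneg (hφ0 t)).trans_le (hle t)) h₀.symm h₀'
    exact absurd ((hzero t₁).trans (hzero t₂).symm) hne
  · have h₂ := hmax.deriv_deriv_nonpos hφ.continuous.continuousAt
    rw [heq.deriv_deriv_eq, h₀', mul_zero, zero_add] at h₂
    have := gbeta_pos (β := β) hpos hlt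
    by_contra! hgt
    nlinarith

lemma conv_le_one_of_isLeast (heq : TruncProfileEq K c β φ) (hK : Integrable K)
    (hφ : ContDiff ℝ 2 φ) (hφ0 : ∀ t, 0 ≤ φ t) (hle : ∀ t, φ t ≤ 2 * β) {t₀ : ℝ}
    (hleast : IsLeast {t | φ t = 2 * β} t₀) : conv K φ t₀ ≤ 1 := by
  by_contra! hgt
  have hmax : IsLocalMax φ t₀ := Eventually.of_forall fun t => hleast.1.symm ▸ hle t
  have hcont := continuous_conv hK hφ.continuous
    (fun t => (abs_of_nonneg (hφ0 t)).trans_le (hle t))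
  obtain ⟨a, u, ⟨hat₀, ht₀u⟩, hsub⟩ :=
    mem_nhds_iff_exists_Ioo_subset.1 (hcont.continuousAt.eventually (lt_mem_nhds hgt))
  have hdecr := le_of_deriv_eq_zero_of_mul_deriv_le_deriv_deriv (c := c)
    (hφ.differentiable two_ne_zero) hφ.differentiable_deriv_two (fun x hx => ?_)
    hmax.deriv_eq_zero hat₀.le
  · exact hat₀.not_ge (hleast.2 (le_antisymm (hle a) (hleast.1 ▸ hdecr)))
  · have : 1 < conv K φ x := hsub ⟨hx.1, hx.2.trans ht₀u⟩
    rw [heq.deriv_deriv_eq]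
    nlinarith [gbeta_nonneg (β := β) (hφ0 x)]

end TruncProfileEq

theorem truncated_solution_bounds_general
    (K : ℝ → ℝ) (hKi : Integrable K)
    (c β : ℝ) (hc : 0 < c) (hβ : 1 < β)
    (φ : ℝ → ℝ) (hφC : ContDiff ℝ 2 φ) (hφ0 : ∀ t, 0 ≤ φ t)
    (hbdd : ∃ M, ∀ t, φ t ≤ M) (hnc : ∃ t₁ t₂, φ t₁ ≠ φ t₂)
    (heq : TruncProfileEq K c β φ)
    (hbot : Tendsto φ atBot (nhds 0)) :
    (∀ t, φ t ≤ 2 * β) ∧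
    (∀ t₀, IsLocalMax φ t₀ → φ t₀ < 2 * β → conv K φ t₀ ≤ 1) ∧
    (∀ t₀, IsLeast {t | φ t = 2 * β} t₀ → conv K φ t₀ ≤ 1) := by
  obtain ⟨M, hM⟩ := hbdd
  have hle := heq.le_two_mul hc.le (by linarith) hφC ⟨M, forall_mem_range.2 hM⟩ hbot
  exact ⟨hle, fun _ hmax hlt => heq.conv_le_one_of_isLocalMax hKi hφC hφ0 hle hnc hmax hlt,
    fun _ hleast => heq.conv_le_one_of_isLeast hKi hφC hφ0 hle hleast⟩

/-- any nonnegative bounded non-constant solution of the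
truncated equation vanishing at `-∞` is bounded by `2β`; at a local maximum
below `2β`, or at the first point where the value `2β` is reached, the
convolution is at most `1`. -/
theorem truncated_solution_bounds
    (K : ℝ → ℝ) (hKi : Integrable K)
    (hK0 : ∀ᵐ s ∂(volume : Measure ℝ), 0 ≤ K s)
    (hK1 : (∫ s, K s) = 1)
    (c β : ℝ) (hc : 0 < c) (hβ : 1 < β)
    (φ : ℝ → ℝ) (hφC : ContDiff ℝ 2 φ) (hφ0 : ∀ t, 0 ≤ φ t)
    (hbdd : ∃ M, ∀ t, φ t ≤ M) (hnc : ∃ t₁ t₂, φ t₁ ≠ φ t₂)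
    (heq : TruncProfileEq K c β φ)
    (hbot : Tendsto φ atBot (nhds 0)) :
    (∀ t, φ t ≤ 2 * β) ∧
    (∀ t₀, IsLocalMax φ t₀ → φ t₀ < 2 * β → conv K φ t₀ ≤ 1) ∧
    (∀ t₀, IsLeast {t | φ t = 2 * β} t₀ → conv K φ t₀ ≤ 1) :=
  truncated_solution_bounds_general K hKi c β hc hβ φ hφC hφ0 hbdd hnc heq hbot
end
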